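/- arXiv:2309.09820 — 2 statements merged into one kernel-verified Lean document; each statement's English description precedes it below -/
import Mathlib

section
/- Let M be a compact complex manifold satisfying the ∂∂̄-lemma for forms of positive bidegrees, and suppose every holomorphic differential form on M is closed. If ξ is a (p,0)-form with p ≥ 1 and ∂ξ is closed, then ∂ξ = 0. -/
/-- Lemma 2.1 of the paper: let `M` be a compact complex manifold
satisfying the `∂∂̄`-lemma for forms of positive bidegrees, on which every holomorphic
differential form is closed.  If `ξ` is a `(p,0)`-form, `p ≥ 1`, and `∂ξ` is closed, then
`∂ξ = 0`.

Encoding: `Apm0 = Ω^{p-1,0}`, `Ap0 = Ω^{p,0}`, `Apl0 = Ω^{p+1,0}`, `Apll0 = Ω^{p+2,0}`,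
`Ap1 = Ω^{p,1}`, `Apl1 = Ω^{p+1,1}`, `Ap2 = Ω^{p,2}` with the Dolbeault operators between
them: `del_* = ∂`, `dbar_* = ∂̄`.  Hypotheses record `∂∂ = 0`, `∂̄∂̄ = 0`, the
anticommutation `∂̄∂ = -∂∂̄`, the positive-bidegree `∂∂̄`-lemma applied to closed
`∂̄`-exact `(p,1)`-forms (yielding `σ = ∂̄∂η`), and that holomorphic `(p,0)`-forms are
closed (`∂̄x = 0 → ∂x = 0`).  Closedness of the `(p+1,0)`-form `∂ξ` means `∂∂ξ = 0` and
`∂̄∂ξ = 0`. -/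
theorem killing_stmt16 (p : ℕ) (hp : 1 ≤ p)
    (Apm0 Ap0 Apl0 Apll0 Ap1 Apl1 Ap2 : Type*)
    [AddCommGroup Apm0] [Module ℂ Apm0] [AddCommGroup Ap0] [Module ℂ Ap0]
    [AddCommGroup Apl0] [Module ℂ Apl0] [AddCommGroup Apll0] [Module ℂ Apll0]
    [AddCommGroup Ap1] [Module ℂ Ap1] [AddCommGroup Apl1] [Module ℂ Apl1]
    [AddCommGroup Ap2] [Module ℂ Ap2]
    (del_pm0 : Apm0 →ₗ[ℂ] Ap0) (del_p0 : Ap0 →ₗ[ℂ] Apl0) (del_pl0 : Apl0 →ₗ[ℂ] Apll0)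
    (dbar_p0 : Ap0 →ₗ[ℂ] Ap1) (dbar_pl0 : Apl0 →ₗ[ℂ] Apl1)
    (del_p1 : Ap1 →ₗ[ℂ] Apl1) (dbar_p1 : Ap1 →ₗ[ℂ] Ap2)
    (hdelsq : ∀ η : Apm0, del_p0 (del_pm0 η) = 0)
    (hdbarsq : ∀ x : Ap0, dbar_p1 (dbar_p0 x) = 0)
    (hanticomm : ∀ x : Ap0, dbar_pl0 (del_p0 x) = - del_p1 (dbar_p0 x))
    (hddbar : ∀ σ : Ap1, del_p1 σ = 0 → dbar_p1 σ = 0 → (∃ x : Ap0, σ = dbar_p0 x) →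
      ∃ η : Apm0, σ = dbar_p0 (del_pm0 η))
    (hholclosed : ∀ x : Ap0, dbar_p0 x = 0 → del_p0 x = 0)
    (ξ : Ap0)
    (hclosed1 : del_pl0 (del_p0 ξ) = 0) (hclosed2 : dbar_pl0 (del_p0 ξ) = 0) :
    del_p0 ξ = 0 := by
  have hdel1 : del_p1 (dbar_p0 ξ) = 0 := by
    have h := hanticomm ξ
    rw [hclosed2] at h
    exact (neg_eq_zero.mp h.symm)
  obtain ⟨η, hη⟩ := hddbar (dbar_p0 ξ) hdel1 (hdbarsq ξ) ⟨ξ, rfl⟩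
  have hhol : dbar_p0 (ξ - del_pm0 η) = 0 := by
    rw [map_sub, ← hη, sub_self]
  have := hholclosed _ hhol
  rw [map_sub, hdelsq, sub_zero] at this
  exact this
end

section
/- Let v be a Killing field on a pseudo-Kähler manifold (M,g,J), B = ∇v, A = JB - BJ. Identify vector fields with complex 1-forms and skew-adjoint endomorphisms with complex 2-forms via g. Then ξ = (Jv)♭ - i·v♭ is a (1,0)-form, ζ corresponding to A - iAJ is a (2,0)-form, and dξ = ζ + γ where γ corresponding to i(JBJ - B) is a (1,1)-form; consequently ∂ξ = ζ and ∂̄ξ = γ. -/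
/-- Lemma 2.4 of the paper: let `v` be a Killing field on a pseudo-Kähler
manifold `(M,g,J)`, `B = ∇v` (so `B* = -B`), `A = JB - BJ`.  With vector fields identified
with complex 1-forms and skew-adjoint endomorphisms with complex 2-forms via `g`, the form
`ξ = (Jv)♭ - i·v♭` is a `(1,0)`-form, `ζ = A - iAJ` (i.e. `ζ(X,Y) = g(AX,Y) - i g(AJX,Y)`)
is a `(2,0)`-form, and `dξ = ζ + γ` where `γ = i(JBJ - B)` (i.e.
`γ(X,Y) = i(g(JBJX,Y) - g(BX,Y))`) is a `(1,1)`-form; consequently, by the uniqueness of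
the bidegree decomposition, `∂ξ = ζ` and `∂̄ξ = γ`.

Encoding: as in the other statements, `R` is the ring of smooth functions, `L` the
`R`-module of vector fields, `bracket` the Lie bracket, `D` the directional derivative,
`nabla` the Levi-Civita connection, `g` the metric, `J` the parallel skew-adjoint complex
structure.  Complex-valued forms are recorded by their real and imaginary parts:
`ξ = (ξre, ξim)` with `ξre Y = g(Jv,Y)`, `ξim Y = -g(v,Y)`; `ζ = (ζre, ζim)` with
`ζre X Y = g(AX,Y)`, `ζim X Y = -g(A(JX),Y)`; `γ = (0, γim)` with
`γim X Y = g(JBJX,Y) - g(BX,Y)`.  The `(1,0)` condition `ξ(Jx) = iξ(x)`, the `(2,0)`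
conditions `ζ(JX,Y) = iζ(X,Y) = ζ(X,JY)`, the `(1,1)` condition `γ(JX,JY) = γ(X,Y)` and
the identity `dξ = ζ + γ` (via the invariant formula
`dα(X,Y) = X α(Y) - Y α(X) - α([X,Y])`) are all stated componentwise. -/
theorem killing_stmt19 (R : Type*) [CommRing R] (L : Type*) [AddCommGroup L] [Module R L]
    (bracket : L → L → L) (nabla : L → L → L) (D : L → R → R)
    (g : L →ₗ[R] L →ₗ[R] R) (J : L →ₗ[R] L)
    (htorsionfree : ∀ u w, bracket u w = nabla u w - nabla w u)
    (hmetric : ∀ X Y Z, D X (g Y Z) = g (nabla X Y) Z + g Y (nabla X Z))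
    (hgsymm : ∀ x y, g x y = g y x)
    (hJ2 : ∀ x, J (J x) = -x)
    (hJskew : ∀ x y, g (J x) y = - g x (J y))
    (hJparallel : ∀ u w, nabla u (J w) = J (nabla u w))
    (v : L) (hKilling : ∀ X Y, g (nabla X v) Y = - g X (nabla Y v))
    (B A : L → L)
    (hB : ∀ X, B X = nabla X v)
    (hA : ∀ X, A X = J (B X) - B (J X)) :
    -- ξ = (Jv)♭ - i v♭ is a (1,0)-form: ξ(Jx) = i ξ(x)
    (∀ x, g (J v) (J x) = g v x ∧ - g v (J x) = g (J v) x) ∧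
    -- ζ = A - iAJ, i.e. ζ(X,Y) = g(AX,Y) - i·g(A(JX),Y), is a (2,0)-form:
    -- ζ(JX,Y) = i ζ(X,Y) = ζ(X,JY), componentwise
    (∀ X Y, - g (A (J (J X))) Y = g (A X) Y) ∧
    (∀ X Y, g (A X) (J Y) = g (A (J X)) Y) ∧
    (∀ X Y, - g (A (J X)) (J Y) = g (A X) Y) ∧
    -- dξ = ζ + γ, componentwise
    (∀ X Y, D X (g (J v) Y) - D Y (g (J v) X) - g (J v) (bracket X Y) = g (A X) Y) ∧
    (∀ X Y, D X (-(g v Y)) - D Y (-(g v X)) - (-(g v (bracket X Y)))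
      = - g (A (J X)) Y + (g (J (B (J X))) Y - g (B X) Y)) ∧
    -- γ = i(JBJ - B) is a (1,1)-form: γ(JX,JY) = γ(X,Y)
    (∀ X Y, g (J (B (J (J X)))) (J Y) - g (B (J X)) (J Y)
      = g (J (B (J X))) Y - g (B X) Y) := by
  have hBs : ∀ X Y, g (B X) Y = - g X (B Y) := by
    intro X Y; rw [hB, hB]; exact hKilling X Y
  have hgB2 : ∀ X Y, g (B (J (J X))) Y = - g (B X) Y := by
    intro X Y
    rw [hBs, hJ2, map_neg, LinearMap.neg_apply, hBs]
  refine ⟨?_, ?_, ?_, ?_, ?_, ?_, ?_⟩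
  · intro x
    constructor
    · rw [hJskew, hJ2, map_neg]; ring
    · rw [hJskew]
  · intro X Y
    rw [hA, hA, map_sub, LinearMap.sub_apply, map_sub, LinearMap.sub_apply,
      hJskew (B (J (J X))) Y, hgB2, hgB2 (J X) Y, hJskew (B X) Y]
    ring
  · intro X Y
    rw [hA, hA, map_sub, LinearMap.sub_apply, map_sub, LinearMap.sub_apply,
      hJskew (B X) (J Y), hJ2 Y, map_neg, hJskew (B (J X)) Y, hgB2]
    ring
  · intro X Y
    rw [hA, hA, map_sub, LinearMap.sub_apply, map_sub, LinearMap.sub_apply,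
      hJskew (B (J X)) (J Y), hJ2 Y, map_neg, hgB2, hJskew (B X) Y]
    ring
  · intro X Y
    rw [hmetric, hmetric, hJparallel, hJparallel, htorsionfree, map_sub,
      ← hB, ← hB, hA, map_sub, LinearMap.sub_apply]
    have h1 : g (J (B Y)) X = g (B (J X)) Y := by
      rw [hJskew, hBs, neg_neg, hgsymm Y (B (J X))]
    rw [h1]; ring
  · intro X Y
    have key : ∀ X Y, D X (-(g v Y)) = - g (B X) Y - g v (nabla X Y) := by
      intro X Y
      have h0 : -(g v Y) = g (J (J v)) Y := by
        rw [hJ2, map_neg, LinearMap.neg_apply]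
      rw [h0, hmetric, hJparallel, hJparallel, hJ2 (nabla X v), hJ2 v,
        map_neg, map_neg, LinearMap.neg_apply, LinearMap.neg_apply, hB]
      ring
    rw [key, key, htorsionfree, map_sub, hA, map_sub, LinearMap.sub_apply, hgB2]
    have h1 : g (B Y) X = - g (B X) Y := by
      rw [hBs, hgsymm Y (B X)]
    rw [h1]; ring
  · intro X Y
    rw [hJskew (B (J (J X))) (J Y), hJ2 Y, map_neg, hgB2, hJskew (B (J X)) Y]
    ring
end
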